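/- Let x, y ∈ ℂⁿ be nonzero. There exists a Hermitian negative semidefinite matrix Δ ∈ ℂ^{n×n} (Δ ⪯ 0) with Δx = y if and only if xᴴy is a negative real number. Moreover, if this condition holds, then the minimum of ‖Δ‖ over all negative semidefinite Δ with Δx = y equals ‖y‖²/|xᴴy|, and this minimum is attained by the rank-one matrix Δ̃ = (1/(xᴴy)) · y yᴴ. -/

import Mathlib

open Matrix
open scoped ComplexOrder

/-- The spectral norm (ℓ² operator norm) of a complex matrix. -/
noncomputable def specNorm {k : Type*} [Fintype k] [DecidableEq k]
    (X : Matrix k k ℂ) : ℝ :=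
  ‖Matrix.toEuclideanCLM (𝕜 := ℂ) X‖

/-!
Write `-Δ = Bᴴ B`. Then `xᴴ y = -‖B x‖²` is real and nonpositive, and `y = -Bᴴ (B x)` gives
`‖y‖² ≤ ‖Bᴴ‖² ‖B x‖² = ‖Δ‖ |xᴴ y|` by the C⋆-identity. For `y ≠ 0` this rules out `xᴴ y = 0`,
and it is the lower bound `‖y‖² / |xᴴ y| ≤ ‖Δ‖`. The rank-one matrix `(xᴴ y)⁻¹ y yᴴ` attains it:
it maps `x` to `y` because `yᴴ x = xᴴ y` is real, and its norm is `‖y‖² / |xᴴ y|`.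
-/

open scoped InnerProductSpace

namespace ContinuousLinearMap

variable {𝕜 E F : Type*} [RCLike 𝕜] [NormedAddCommGroup E] [InnerProductSpace 𝕜 E]
  [CompleteSpace E] [NormedAddCommGroup F] [InnerProductSpace 𝕜 F] [CompleteSpace F]

theorem norm_adjoint_comp_self_apply_sq_le (S : E →L[𝕜] F) (v : E) :
    ‖(adjoint S ∘L S) v‖ ^ 2 ≤ ‖adjoint S ∘L S‖ * RCLike.re ⟪v, (adjoint S ∘L S) v⟫_𝕜 := by
  rw [← apply_norm_sq_eq_inner_adjoint_right, norm_adjoint_comp_self, ← adjoint.norm_map S]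
  calc ‖adjoint S (S v)‖ ^ 2 ≤ (‖adjoint S‖ * ‖S v‖) ^ 2 := by gcongr; exact le_opNorm _ _
    _ = ‖adjoint S‖ * ‖adjoint S‖ * ‖S v‖ ^ 2 := by ring

end ContinuousLinearMap

namespace Matrix

variable {𝕜 ι : Type*} [RCLike 𝕜] [Fintype ι]

open scoped MatrixOrder Matrix.Norms.L2Operator in
theorem PosSemidef.norm_toEuclideanCLM_apply_sq_le [DecidableEq ι] {A : Matrix ι ι 𝕜}
    (hA : A.PosSemidef) (v : EuclideanSpace 𝕜 ι) :
    ‖toEuclideanCLM (𝕜 := 𝕜) A v‖ ^ 2 ≤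
      ‖toEuclideanCLM (𝕜 := 𝕜) A‖ * RCLike.re ⟪v, toEuclideanCLM (𝕜 := 𝕜) A v⟫_𝕜 := by
  obtain ⟨B, rfl⟩ := CStarAlgebra.nonneg_iff_eq_star_mul_self.mp hA.nonneg
  rw [map_mul, map_star, ContinuousLinearMap.star_eq_adjoint]
  exact ContinuousLinearMap.norm_adjoint_comp_self_apply_sq_le _ v

theorem posSemidef_neg_inv_smul_vecMulVec_self_star {c : 𝕜} (hc : c ≤ 0) (v : ι → 𝕜) :
    (-(c⁻¹ • vecMulVec v (star v))).PosSemidef := by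
  rw [← neg_smul, ← inv_neg]
  exact (posSemidef_vecMulVec_self_star v).smul (inv_nonneg.mpr (neg_nonneg.mpr hc))

end Matrix

section SpecNorm

variable {ι : Type*} [Fintype ι] [DecidableEq ι]

theorem specNorm_smul (a : ℂ) (X : Matrix ι ι ℂ) : specNorm (a • X) = ‖a‖ * specNorm X := by
  rw [specNorm, map_smul, norm_smul, specNorm]

theorem specNorm_vecMulVec_star (u v : EuclideanSpace ℂ ι) :
    specNorm (vecMulVec u (star (v : ι → ℂ))) = ‖u‖ * ‖v‖ := by
  have h : toEuclideanCLM (𝕜 := ℂ) (vecMulVec u (star (v : ι → ℂ))) =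
      InnerProductSpace.rankOne ℂ u v := by
    apply ContinuousLinearMap.coe_injective
    rw [coe_toEuclideanCLM_eq_toEuclideanLin, ← InnerProductSpace.symm_toEuclideanLin_rankOne]
    exact LinearEquiv.apply_symm_apply _ _
  rw [specNorm, h, InnerProductSpace.norm_rankOne]

end SpecNorm

section NegSemidef

variable {ι : Type*} [Fintype ι] {x y : EuclideanSpace ℂ ι}

theorem inv_inner_smul_vecMulVec_mulVec (hc : ⟪x, y⟫_ℂ < 0) :
    ((⟪x, y⟫_ℂ)⁻¹ • vecMulVec (y : ι → ℂ) (star (y : ι → ℂ))) *ᵥ x = y := by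
  have hyx : star (y : ι → ℂ) ⬝ᵥ x = ⟪x, y⟫_ℂ := by
    rw [dotProduct_comm, ← EuclideanSpace.inner_eq_star_dotProduct, ← inner_conj_symm,
      Complex.conj_eq_iff_im.mpr (Complex.neg_iff.mp hc).2]
  rw [smul_mulVec, vecMulVec_mulVec, op_smul_eq_smul, hyx, smul_smul, inv_mul_cancel₀ hc.ne,
    one_smul]

variable [DecidableEq ι] {D : Matrix ι ι ℂ}

theorem toEuclideanCLM_neg_apply_of_mulVec_eq (hDx : D *ᵥ x = y) :
    toEuclideanCLM (𝕜 := ℂ) (-D) x = -y := by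
  apply WithLp.ofLp_injective
  rw [ofLp_toEuclideanCLM, neg_mulVec, hDx, WithLp.ofLp_neg]

theorem neg_inner_nonneg_of_negSemidef (hD : (-D).PosSemidef) (hDx : D *ᵥ x = y) :
    0 ≤ -⟪x, y⟫_ℂ := by
  have h := (isPositive_toEuclideanLin_iff.mpr hD).inner_nonneg_right x
  rwa [← coe_toEuclideanCLM_eq_toEuclideanLin, ContinuousLinearMap.coe_coe,
    toEuclideanCLM_neg_apply_of_mulVec_eq hDx, inner_neg_right] at h

theorem norm_sq_le_specNorm_mul_norm_inner (hD : (-D).PosSemidef) (hDx : D *ᵥ x = y) :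
    ‖y‖ ^ 2 ≤ specNorm D * ‖⟪x, y⟫_ℂ‖ := by
  have h := hD.norm_toEuclideanCLM_apply_sq_le x
  rw [toEuclideanCLM_neg_apply_of_mulVec_eq hDx, norm_neg, inner_neg_right, map_neg, norm_neg,
    ← specNorm] at h
  exact h.trans (mul_le_mul_of_nonneg_left ((RCLike.re_le_norm _).trans_eq (norm_neg _))
    (norm_nonneg _))

theorem inner_neg_of_negSemidef (hy : y ≠ 0) (hD : (-D).PosSemidef) (hDx : D *ᵥ x = y) :
    ⟪x, y⟫_ℂ < 0 := by
  refine lt_of_le_of_ne (neg_nonneg.mp (neg_inner_nonneg_of_negSemidef hD hDx)) fun hc ↦ hy ?_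
  have h := norm_sq_le_specNorm_mul_norm_inner hD hDx
  rw [hc, norm_zero, mul_zero] at h
  exact norm_eq_zero.mp (pow_eq_zero_iff two_ne_zero |>.mp (le_antisymm h (sq_nonneg _)))

theorem norm_sq_div_norm_inner_le_specNorm (hD : (-D).PosSemidef) (hDx : D *ᵥ x = y) :
    ‖y‖ ^ 2 / ‖⟪x, y⟫_ℂ‖ ≤ specNorm D :=
  div_le_of_le_mul₀ (norm_nonneg _) (norm_nonneg _) (norm_sq_le_specNorm_mul_norm_inner hD hDx)

end NegSemidef

theorem negSemidef_mapping_general {n : ℕ} (x y : EuclideanSpace ℂ (Fin n))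
    (hy : y ≠ 0) :
    ((∃ D : Matrix (Fin n) (Fin n) ℂ, (-D).PosSemidef ∧ D.mulVec x = y) ↔
      ((inner ℂ x y : ℂ).im = 0 ∧ (inner ℂ x y : ℂ).re < 0)) ∧
    (((inner ℂ x y : ℂ).im = 0 ∧ (inner ℂ x y : ℂ).re < 0) →
      (IsLeast {r : ℝ | ∃ D : Matrix (Fin n) (Fin n) ℂ,
          (-D).PosSemidef ∧ D.mulVec x = y ∧ r = specNorm D}
        (‖y‖ ^ 2 / ‖(inner ℂ x y : ℂ)‖) ∧
      ((-((inner ℂ x y : ℂ)⁻¹ • Matrix.vecMulVec y (star (y : Fin n → ℂ)))).PosSemidef ∧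
        ((inner ℂ x y : ℂ)⁻¹ • Matrix.vecMulVec y (star (y : Fin n → ℂ))).mulVec x = y ∧
        specNorm ((inner ℂ x y : ℂ)⁻¹ • Matrix.vecMulVec y (star (y : Fin n → ℂ))) =
          ‖y‖ ^ 2 / ‖(inner ℂ x y : ℂ)‖))) := by
  have hneg : ((inner ℂ x y : ℂ).im = 0 ∧ (inner ℂ x y : ℂ).re < 0) ↔ ⟪x, y⟫_ℂ < 0 := by
    rw [Complex.neg_iff, and_comm]
  rw [hneg]
  have hnorm : specNorm ((⟪x, y⟫_ℂ)⁻¹ • vecMulVec (y : Fin n → ℂ) (star (y : Fin n → ℂ))) =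
      ‖y‖ ^ 2 / ‖⟪x, y⟫_ℂ‖ := by
    rw [specNorm_smul, specNorm_vecMulVec_star, norm_inv, sq, inv_mul_eq_div]
  have hΔ (hc : ⟪x, y⟫_ℂ < 0) :=
    And.intro (posSemidef_neg_inv_smul_vecMulVec_self_star hc.le (y : Fin n → ℂ))
      (inv_inner_smul_vecMulVec_mulVec hc)
  refine ⟨⟨fun ⟨D, hD, hDx⟩ ↦ inner_neg_of_negSemidef hy hD hDx, fun hc ↦ ⟨_, hΔ hc⟩⟩,
    fun hc ↦ ⟨⟨⟨_, (hΔ hc).1, (hΔ hc).2, hnorm.symm⟩, ?_⟩, (hΔ hc).1, (hΔ hc).2, hnorm⟩⟩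
  rintro r ⟨D, hD, hDx, rfl⟩
  exact norm_sq_div_norm_inner_le_specNorm hD hDx

/-- Negative semidefinite mapping lemma: for nonzero `x, y` there is a Hermitian
negative semidefinite `Δ` with `Δx = y` iff `xᴴy` is a negative real number; in
that case the minimal spectral norm is `‖y‖²/|xᴴy|`, attained by the rank-one
matrix `Δ̃ = (1/(xᴴy)) y yᴴ`. -/
theorem negSemidef_mapping {n : ℕ} (x y : EuclideanSpace ℂ (Fin n))
    (hx : x ≠ 0) (hy : y ≠ 0) :
    ((∃ D : Matrix (Fin n) (Fin n) ℂ, (-D).PosSemidef ∧ D.mulVec x = y) ↔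
      ((inner ℂ x y : ℂ).im = 0 ∧ (inner ℂ x y : ℂ).re < 0)) ∧
    (((inner ℂ x y : ℂ).im = 0 ∧ (inner ℂ x y : ℂ).re < 0) →
      (IsLeast {r : ℝ | ∃ D : Matrix (Fin n) (Fin n) ℂ,
          (-D).PosSemidef ∧ D.mulVec x = y ∧ r = specNorm D}
        (‖y‖ ^ 2 / ‖(inner ℂ x y : ℂ)‖) ∧
      ((-((inner ℂ x y : ℂ)⁻¹ • Matrix.vecMulVec y (star (y : Fin n → ℂ)))).PosSemidef ∧
        ((inner ℂ x y : ℂ)⁻¹ • Matrix.vecMulVec y (star (y : Fin n → ℂ))).mulVec x = y ∧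
        specNorm ((inner ℂ x y : ℂ)⁻¹ • Matrix.vecMulVec y (star (y : Fin n → ℂ))) =
          ‖y‖ ^ 2 / ‖(inner ℂ x y : ℂ)‖))) :=
  negSemidef_mapping_general x y hy
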